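/- Let K be a valued field, C ⊂ K a finite set, and λ ≥ 0 an element of the value group. Then two elements x, y ∈ K \ C lie in the same ball λ-next to C if and only if for every c ∈ C, v(x - y) > λ + v(x - c). -/

import Mathlib

/-- The open ball of (valuative) radius `μ` around `a` in a valued field, additive notation:
`B_{>μ}(a) = {x : v(x - a) > μ}`. -/
def vBall {K Γ : Type*} [Field K] [AddCommGroup Γ] [LinearOrder Γ] [IsOrderedAddMonoid Γ]
    (v : AddValuation K (WithTop Γ)) (μ : Γ) (a : K) : Set K :=
  {x : K | (μ : WithTop Γ) < v (x - a)}

/-- The ball `B_{>μ}(b)` is a ball 1-next to `C`: it is disjoint from `C` and maximal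
(w.r.t. inclusion) among open balls disjoint from `C`. -/
def IsOneNext {K Γ : Type*} [Field K] [AddCommGroup Γ] [LinearOrder Γ] [IsOrderedAddMonoid Γ]
    (v : AddValuation K (WithTop Γ)) (C : Set K) (b : K) (μ : Γ) : Prop :=
  vBall v μ b ∩ C = ∅ ∧
    ∀ (b' : K) (μ' : Γ), vBall v μ b ⊆ vBall v μ' b' → vBall v μ' b' ∩ C = ∅ →
      vBall v μ' b' = vBall v μ b

/-- `B` is a ball `λ`-next to `C`: an open ball contained in a ball `B₀` 1-next to `C`,
of radius `rad B₀ + λ`. -/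
def IsLambdaNext {K Γ : Type*} [Field K] [AddCommGroup Γ] [LinearOrder Γ] [IsOrderedAddMonoid Γ]
    (v : AddValuation K (WithTop Γ)) (C : Set K) (lam : Γ) (B : Set K) : Prop :=
  ∃ (b : K) (μ : Γ) (a : K), IsOneNext v C b μ ∧ a ∈ vBall v μ b ∧ B = vBall v (μ + lam) a

/-!
For `x ∉ C` put `ρ(x) = max_{c ∈ C} v(x - c)`. The ball 1-next to `C` containing `x` is
`B_{>ρ(x)}(x)`: it avoids `C`, and any larger ball would contain a point of `C` realising the
maximum (surjectivity of `v` makes radii of balls well defined). Hence the ball `λ`-next to `C`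
containing `x` is `B_{>ρ(x)+λ}(x)`, and `y` lies in it iff `v(x - y) > λ + ρ(x)`.
-/

section

variable {K Γ : Type*} [Field K] [AddCommGroup Γ] [LinearOrder Γ] [IsOrderedAddMonoid Γ]
  (v : AddValuation K (WithTop Γ))

lemma mem_vBall_self (μ : Γ) (a : K) : a ∈ vBall v μ a := by
  simp [vBall]

lemma lt_valuation_sub_of_mem_vBall {μ : Γ} {a x y : K} (hx : x ∈ vBall v μ a)
    (hy : y ∈ vBall v μ a) : (μ : WithTop Γ) < v (x - y) := by
  rw [← sub_sub_sub_cancel_right x y a]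
  exact (lt_min hx hy).trans_le (v.map_sub _ _)

lemma vBall_eq_of_mem {μ : Γ} {a b : K} (h : a ∈ vBall v μ b) :
    vBall v μ a = vBall v μ b := by
  ext z
  constructor
  · intro hz
    rw [vBall, Set.mem_ofPred_eq, ← sub_add_sub_cancel z a b]
    exact (lt_min hz h).trans_le (v.map_add _ _)
  · exact fun hz => lt_valuation_sub_of_mem_vBall v hz h

lemma vBall_subset_vBall {μ μ' : Γ} (h : μ' ≤ μ) (a : K) : vBall v μ a ⊆ vBall v μ' a :=
  fun _ hz => (WithTop.coe_le_coe.2 h).trans_lt hz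

lemma le_of_vBall_subset_vBall (hv : Function.Surjective v) {μ₁ μ₂ : Γ} {a : K}
    (h : vBall v μ₁ a ⊆ vBall v μ₂ a) : μ₂ ≤ μ₁ := by
  by_contra! hlt
  obtain ⟨z, hz⟩ := hv (μ₂ : WithTop Γ)
  have hmem : a + z ∈ vBall v μ₁ a := by
    simpa [vBall, hz] using hlt
  simpa [vBall, hz] using h hmem

lemma vBall_inter_eq_empty_iff {C : Set K} {μ : Γ} {x : K} :
    vBall v μ x ∩ C = ∅ ↔ ∀ c ∈ C, v (x - c) ≤ μ := by
  simp only [Set.eq_empty_iff_forall_notMem, Set.mem_inter_iff, not_and', vBall,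
    Set.mem_ofPred_eq, not_lt, v.map_sub_swap _ x]

lemma exists_isGreatest_valuation_sub {C : Set K} (hCfin : C.Finite) (hCne : C.Nonempty)
    {x : K} (hx : x ∉ C) : ∃ μ : Γ, IsGreatest ((fun c => v (x - c)) '' C) μ := by
  obtain ⟨c₀, hc₀, hmax⟩ := Set.exists_max_image C (fun c => v (x - c)) hCfin hCne
  have hne : v (x - c₀) ≠ ⊤ := by
    rw [AddValuation.ne_top_iff, sub_ne_zero]
    exact ne_of_mem_of_not_mem hc₀ hx |>.symm
  obtain ⟨μ, hμ⟩ := WithTop.ne_top_iff_exists.1 hne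
  exact ⟨μ, ⟨c₀, hc₀, hμ.symm⟩, by rintro _ ⟨c, hc, rfl⟩; exact hμ ▸ hmax c hc⟩

lemma isOneNext_of_isGreatest {C : Set K} {x : K} {μ : Γ}
    (hμ : IsGreatest ((fun c => v (x - c)) '' C) μ) : IsOneNext v C x μ := by
  obtain ⟨⟨c₀, hc₀, hc₀μ⟩, hmax⟩ := hμ
  refine ⟨(vBall_inter_eq_empty_iff v).2 fun c hc => hmax ⟨c, hc, rfl⟩,
    fun b μ' hsub hdisj => ?_⟩
  have hball := vBall_eq_of_mem v (hsub (mem_vBall_self v μ x))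
  rw [← hball] at hdisj hsub ⊢
  have hle : μ ≤ μ' :=
    WithTop.coe_le_coe.1 <| hc₀μ ▸ (vBall_inter_eq_empty_iff v).1 hdisj c₀ hc₀
  exact (vBall_subset_vBall v hle x).antisymm hsub

lemma IsOneNext.isGreatest_of_mem (hv : Function.Surjective v) {C : Set K} (hCfin : C.Finite)
    (hCne : C.Nonempty) {b x : K} {μ : Γ} (hb : IsOneNext v C b μ) (hx : x ∈ vBall v μ b) :
    IsGreatest ((fun c => v (x - c)) '' C) μ := by
  have hball := vBall_eq_of_mem v hx
  have hbound : ∀ c ∈ C, v (x - c) ≤ μ := (vBall_inter_eq_empty_iff v).1 (hball ▸ hb.1)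
  have hxC : x ∉ C := fun hxC => by simpa using hbound x hxC
  obtain ⟨ν, hν⟩ := exists_isGreatest_valuation_sub v hCfin hCne hxC
  have hνμ : ν ≤ μ := by
    obtain ⟨c, hc, hcν⟩ := hν.1
    exact WithTop.coe_le_coe.1 (hcν ▸ hbound c hc)
  have hmaximal : vBall v ν x = vBall v μ b :=
    hb.2 x ν (hball ▸ vBall_subset_vBall v hνμ x) (isOneNext_of_isGreatest v hν).1
  have hμν : μ ≤ ν := le_of_vBall_subset_vBall v hv (hball ▸ hmaximal.le)
  exact le_antisymm hνμ hμν ▸ hν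

end

theorem stmt14_general {K Γ : Type*} [Field K] [AddCommGroup Γ] [LinearOrder Γ] [IsOrderedAddMonoid Γ]
    (v : AddValuation K (WithTop Γ)) (hv : Function.Surjective v)
    (C : Set K) (hCfin : C.Finite) (hCne : C.Nonempty)
    (lam : Γ) (hlam : 0 ≤ lam) (x y : K) :
    (∃ B : Set K, IsLambdaNext v C lam B ∧ x ∈ B ∧ y ∈ B) ↔
      ∀ c ∈ C, (lam : WithTop Γ) + v (x - c) < v (x - y) := by
  constructor
  · rintro ⟨_, ⟨b, μ, a, hb, ha, rfl⟩, hxB, hyB⟩ c hc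
    have hxb : x ∈ vBall v μ b :=
      vBall_eq_of_mem v ha ▸ vBall_subset_vBall v (le_add_of_nonneg_right hlam) a hxB
    have hμ := hb.isGreatest_of_mem v hv hCfin hCne hxb
    calc (lam : WithTop Γ) + v (x - c) ≤ lam + μ := add_le_add_right (hμ.2 ⟨c, hc, rfl⟩) _
      _ = ((μ + lam : Γ) : WithTop Γ) := by rw [add_comm, WithTop.coe_add]
      _ < v (x - y) := lt_valuation_sub_of_mem_vBall v hxB hyB
  · intro h
    have hxC : x ∉ C := fun hxC => by simpa using h x hxC
    obtain ⟨μ, hμ⟩ := exists_isGreatest_valuation_sub v hCfin hCne hxC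
    obtain ⟨c₀, hc₀, hc₀μ : v (x - c₀) = μ⟩ := hμ.1
    refine ⟨vBall v (μ + lam) x, ⟨x, μ, x, isOneNext_of_isGreatest v hμ, mem_vBall_self v μ x, rfl⟩,
      mem_vBall_self v _ x, ?_⟩
    have hxy := h c₀ hc₀
    rw [hc₀μ, ← WithTop.coe_add, add_comm] at hxy
    rwa [vBall, Set.mem_ofPred_eq, v.map_sub_swap]

/-- Let `K` be a valued field, `C ⊂ K` a finite nonempty set, `λ ≥ 0` in the value group.
Two elements `x, y ∈ K \ C` lie in the same ball `λ`-next to `C` if and only if for every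
`c ∈ C`, `v(x - y) > λ + v(x - c)`. -/
theorem stmt14 {K Γ : Type*} [Field K] [AddCommGroup Γ] [LinearOrder Γ] [IsOrderedAddMonoid Γ]
    (v : AddValuation K (WithTop Γ)) (hv : Function.Surjective v)
    (C : Set K) (hCfin : C.Finite) (hCne : C.Nonempty)
    (lam : Γ) (hlam : 0 ≤ lam) (x y : K) (hx : x ∉ C) (hy : y ∉ C) :
    (∃ B : Set K, IsLambdaNext v C lam B ∧ x ∈ B ∧ y ∈ B) ↔
      ∀ c ∈ C, (lam : WithTop Γ) + v (x - c) < v (x - y) :=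
  stmt14_general v hv C hCfin hCne lam hlam x y
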